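/- arXiv:1102.2588 — 2 statements merged into one kernel-verified Lean document; each statement's English description precedes it below -/
import Mathlib

section
/- Under the constraints Γ = a² (i.e., α₁²+α₂²+α₃² = a²) with a = 1 and L = M₁α₁+M₂α₂+M₃α₃ = 0, the integrals satisfy the identity K = F + 4bH - b², where H = (M₁²+M₂²)/2 + M₃² + (c(α₁²-α₂²) + b/α₃²)/2 with c = 1, F = [M₁²-M₂² - b(α₁²-α₂²)/α₃² + α₃²]² + 4[M₁M₂ - bα₁α₂/α₃²]², and K = [M₁²+M₂²+b/α₃²]² + 2α₃²(M₁²-M₂²) + α₃⁴. -/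
/-- The identity with `β` standing for `b / α₃²`, which makes it polynomial. It holds because
`α₁² + α₂² = 1 - α₃²` and `(α₁M₁ + α₂M₂)² = (α₃M₃)²` on the constraint surface, the latter entering
through `(α₁² - α₂²)(M₁² - M₂²) + 4α₁α₂M₁M₂ = 2(α₁M₁ + α₂M₂)² - (α₁² + α₂²)(M₁² + M₂²)`. -/
theorem integral_identity_of_constraints {R : Type*} [CommRing R] (M₁ M₂ M₃ α₁ α₂ α₃ β : R)
    (hΓ : α₁^2 + α₂^2 + α₃^2 = 1) (hL : M₁*α₁ + M₂*α₂ + M₃*α₃ = 0) :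
    (M₁^2 + M₂^2 + β)^2 + 2*α₃^2*(M₁^2 - M₂^2) + α₃^4
      = (M₁^2 - M₂^2 - β*(α₁^2 - α₂^2) + α₃^2)^2 + 4*(M₁*M₂ - β*α₁*α₂)^2
        + 2*(β*α₃^2)*((M₁^2 + M₂^2) + 2*M₃^2 + (α₁^2 - α₂^2) + β) - (β*α₃^2)^2 := by
  linear_combination
    4*β*(M₁*α₁ + M₂*α₂ - M₃*α₃) * hL
      - (β^2*(1 - α₃^2 + α₁^2 + α₂^2) + 2*β*(M₁^2 + M₂^2)) * hΓ

theorem stmt_1 (M₁ M₂ M₃ α₁ α₂ α₃ b : ℝ) (hα₃ : α₃ ≠ 0)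
    (hΓ : α₁^2 + α₂^2 + α₃^2 = 1)
    (hL : M₁*α₁ + M₂*α₂ + M₃*α₃ = 0)
    (H F K : ℝ)
    (hH : H = (M₁^2 + M₂^2)/2 + M₃^2 + ((α₁^2 - α₂^2) + b/α₃^2)/2)
    (hF : F = (M₁^2 - M₂^2 - b*(α₁^2 - α₂^2)/α₃^2 + α₃^2)^2
            + 4*(M₁*M₂ - b*α₁*α₂/α₃^2)^2)
    (hK : K = (M₁^2 + M₂^2 + b/α₃^2)^2 + 2*α₃^2*(M₁^2 - M₂^2) + α₃^4) :
    K = F + 4*b*H - b^2 := by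
  have key := integral_identity_of_constraints M₁ M₂ M₃ α₁ α₂ α₃ (b / α₃^2) hΓ hL
  rw [div_mul_cancel₀ b (pow_ne_zero 2 hα₃)] at key
  rw [hK, hF, hH]
  linear_combination key
end

section
/- The discriminant set of the polynomial W(u) = (1/b)(2b+k-u²)(2b-k+u²)((u-b)²-f²) in the (k,f)-plane (the set of (k,f) for which W has a repeated root, for fixed b > 0, f ≥ 0) is contained in the union of the three lines k = 2b, k = -2b, f = 0 and the four parabolas k = ±2b + (f±b)². More precisely: W has a multiple real root iff k = 2b, or k = -2b, or f = 0, or k = 2b+(f-b)², or k = 2b+(f+b)², or k = -2b+(f-b)², or k = -2b+(f+b)². -/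
/-!
Since `(F * G)' = F' * G + F * G'`, a point is a multiple root of a product exactly when it is
a multiple root of one factor or a common root of two factors. Of the three quadratic factors of
`W`, `2b + k - u²` and `2b - k + u²` have a double root only at `u = 0`, when `k = ∓2b`, and
`(u - b)² - f²` only at `u = b`, when `f = 0`. The first two have no common root, as their sum
is `4b`, and the roots `b ± f` of the third are roots of the first or second factor exactly on
the four parabolas.
-/

theorem sub_sq_sub_sq_eq_zero_iff {R : Type*} [CommRing R] [NoZeroDivisors R] (u b f : R) :
    (u - b) ^ 2 - f ^ 2 = 0 ↔ u = b - f ∨ u = b + f := by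
  rw [sub_eq_zero, sq_eq_sq_iff_eq_or_eq_neg]
  grind

variable {𝕜 : Type*} [NontriviallyNormedField 𝕜]

def IsMultipleRoot (F : 𝕜 → 𝕜) (u : 𝕜) : Prop := F u = 0 ∧ deriv F u = 0

theorem isMultipleRoot_mul_iff {F G : 𝕜 → 𝕜} {u : 𝕜} (hF : DifferentiableAt 𝕜 F u)
    (hG : DifferentiableAt 𝕜 G u) :
    IsMultipleRoot (fun v => F v * G v) u ↔
      IsMultipleRoot F u ∨ IsMultipleRoot G u ∨ (F u = 0 ∧ G u = 0) := by
  unfold IsMultipleRoot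
  rw [deriv_fun_mul hF hG]
  by_cases hF0 : F u = 0 <;> by_cases hG0 : G u = 0 <;> simp [hF0, hG0]

theorem isMultipleRoot_const_mul_iff {c : 𝕜} (hc : c ≠ 0) {F : 𝕜 → 𝕜} {u : 𝕜} :
    IsMultipleRoot (fun v => c * F v) u ↔ IsMultipleRoot F u := by
  simp [IsMultipleRoot, deriv_const_mul_field', hc]

def W (b k f v : 𝕜) : 𝕜 :=
  1 / b * (2 * b + k - v ^ 2) * (2 * b - k + v ^ 2) * ((v - b) ^ 2 - f ^ 2)

variable [CharZero 𝕜]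

theorem isMultipleRoot_const_sub_sq_iff (c u : 𝕜) :
    IsMultipleRoot (fun v => c - v ^ 2) u ↔ u = 0 ∧ c = 0 := by
  have hd : deriv (fun v => c - v ^ 2) u = -(2 * u) := by simp
  rw [IsMultipleRoot, hd]
  grind

theorem isMultipleRoot_const_add_sq_iff (c u : 𝕜) :
    IsMultipleRoot (fun v => c + v ^ 2) u ↔ u = 0 ∧ c = 0 := by
  have hd : deriv (fun v => c + v ^ 2) u = 2 * u := by simp
  rw [IsMultipleRoot, hd]
  grind

theorem isMultipleRoot_sub_sq_sub_iff (a c u : 𝕜) :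
    IsMultipleRoot (fun v => (v - a) ^ 2 - c) u ↔ u = a ∧ c = 0 := by
  have hd : deriv (fun v => (v - a) ^ 2 - c) u = 2 * (u - a) := by simp
  rw [IsMultipleRoot, hd]
  grind

theorem isMultipleRoot_W_iff {b : 𝕜} (hb : b ≠ 0) (k f u : 𝕜) :
    IsMultipleRoot (W b k f) u ↔
      (u = 0 ∧ (2 * b + k = 0 ∨ 2 * b - k = 0)) ∨ (u = b ∧ f = 0) ∨
      ((u = b - f ∨ u = b + f) ∧ (2 * b + k - u ^ 2 = 0 ∨ 2 * b - k + u ^ 2 = 0)) := by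
  have hPQ : ¬ (2 * b + k - u ^ 2 = 0 ∧ 2 * b - k + u ^ 2 = 0) := fun ⟨h1, h2⟩ =>
    hb (by linear_combination (h1 + h2) / 4)
  unfold W
  rw [isMultipleRoot_mul_iff (by fun_prop) (by fun_prop),
    isMultipleRoot_mul_iff (by fun_prop) (by fun_prop),
    isMultipleRoot_const_mul_iff (one_div_ne_zero hb), isMultipleRoot_const_sub_sq_iff,
    isMultipleRoot_const_add_sq_iff, isMultipleRoot_sub_sq_sub_iff, sub_sq_sub_sq_eq_zero_iff]
  simp only [one_div, mul_eq_zero, inv_eq_zero, hb, false_or, pow_eq_zero_iff, ne_eq,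
    OfNat.ofNat_ne_zero, not_false_eq_true]
  tauto

theorem exists_isMultipleRoot_W_iff {b : 𝕜} (hb : b ≠ 0) (k f : 𝕜) :
    (∃ u, IsMultipleRoot (W b k f) u) ↔
      k = 2 * b ∨ k = -2 * b ∨ f = 0 ∨ k = 2 * b + (f - b) ^ 2 ∨ k = 2 * b + (f + b) ^ 2 ∨
        k = -2 * b + (f - b) ^ 2 ∨ k = -2 * b + (f + b) ^ 2 := by
  simp only [isMultipleRoot_W_iff hb]
  constructor
  · rintro ⟨u, ⟨rfl, h | h⟩ | ⟨rfl, rfl⟩ | ⟨rfl | rfl, h | h⟩⟩ <;> grind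
  · rintro (h | h | rfl | h | h | h | h)
    · exact ⟨0, .inl ⟨rfl, .inr (by linear_combination -h)⟩⟩
    · exact ⟨0, .inl ⟨rfl, .inl (by linear_combination h)⟩⟩
    · exact ⟨b, .inr (.inl ⟨rfl, rfl⟩)⟩
    · exact ⟨b - f, .inr (.inr ⟨.inl rfl, .inr (by linear_combination -h)⟩)⟩
    · exact ⟨b + f, .inr (.inr ⟨.inr rfl, .inr (by linear_combination -h)⟩)⟩
    · exact ⟨b - f, .inr (.inr ⟨.inl rfl, .inl (by linear_combination h)⟩)⟩
    · exact ⟨b + f, .inr (.inr ⟨.inr rfl, .inl (by linear_combination h)⟩)⟩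

theorem stmt_13_general (b k f : ℝ) (hb : 0 < b) :
    (∃ u : ℂ,
      (let W : ℂ → ℂ := fun v =>
        (1/(b:ℂ)) * ((2*b + k : ℝ) - v^2) * (((2*b - k : ℝ) : ℂ) + v^2)
          * ((v - (b : ℂ))^2 - ((f : ℝ) : ℂ)^2);
       W u = 0 ∧ deriv W u = 0)) ↔
    (k = 2*b ∨ k = -2*b ∨ f = 0 ∨
     k = 2*b + (f - b)^2 ∨ k = 2*b + (f + b)^2 ∨
     k = -2*b + (f - b)^2 ∨ k = -2*b + (f + b)^2) := by
  have hb' : (b : ℂ) ≠ 0 := by exact_mod_cast hb.ne'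
  refine (exists_congr fun u => ?_).trans ((exists_isMultipleRoot_W_iff hb' k f).trans ?_)
  · simp only [IsMultipleRoot, W]
    push_cast
    rfl
  · norm_cast

theorem stmt_13 (b k f : ℝ) (hb : 0 < b) (hf : 0 ≤ f) :
    (∃ u : ℂ,
      (let W : ℂ → ℂ := fun v =>
        (1/(b:ℂ)) * ((2*b + k : ℝ) - v^2) * (((2*b - k : ℝ) : ℂ) + v^2)
          * ((v - (b : ℂ))^2 - ((f : ℝ) : ℂ)^2);
       W u = 0 ∧ deriv W u = 0)) ↔
    (k = 2*b ∨ k = -2*b ∨ f = 0 ∨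
     k = 2*b + (f - b)^2 ∨ k = 2*b + (f + b)^2 ∨
     k = -2*b + (f - b)^2 ∨ k = -2*b + (f + b)^2) :=
  stmt_13_general b k f hb
end
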